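/- For any graph G and any link (non-loop edge) e of G, contraction of e in the bicircular lift matroid commutes with graph contraction: L(G)/e = L(G/e). -/

import Mathlib

open Finset

/-- A multigraph with vertex type `V`, edge-label type `α`, edge set `E`,
and an endpoints function assigning to each edge an unordered pair of vertices. -/
structure MGraph (V : Type) (α : Type) where
  E : Finset α
  ends : α → Sym2 V

namespace MGraph

variable {V V₁ V₂ : Type} {α : Type} [DecidableEq V] [DecidableEq V₁] [DecidableEq V₂]
  [DecidableEq α]

/-- `u` and `v` are joined by an edge of `X`. -/
def Adj (G : MGraph V α) (X : Finset α) (u v : V) : Prop :=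
  ∃ e ∈ X, G.ends e = s(u, v)

/-- `v` is incident with an edge of `X`. -/
def VIn (G : MGraph V α) (X : Finset α) (v : V) : Prop :=
  ∃ e ∈ X, v ∈ G.ends e

/-- The degree of `v` in the edge set `X` (loops count twice). -/
def degIn (G : MGraph V α) (X : Finset α) (v : V) : ℕ :=
  ∑ e ∈ X, (if G.ends e = s(v, v) then 2 else if v ∈ G.ends e then 1 else 0)

/-- `C` is the edge set of a cycle of `G`: a nonempty connected 2-regular subgraph. -/
def IsCycle (G : MGraph V α) (C : Finset α) : Prop :=
  C.Nonempty ∧ C ⊆ G.E ∧ (∀ v, G.VIn C v → G.degIn C v = 2) ∧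
    ∀ u v, G.VIn C u → G.VIn C v → Relation.ReflTransGen (G.Adj C) u v

/-- The subgraph on edge set `X` contains at least two (distinct) cycles. -/
def TwoCycles (G : MGraph V α) (X : Finset α) : Prop :=
  ∃ C₁ C₂ : Finset α, G.IsCycle C₁ ∧ G.IsCycle C₂ ∧ C₁ ⊆ X ∧ C₂ ⊆ X ∧ C₁ ≠ C₂

/-- `X` is a circuit of the bicircular lift matroid `L(G)`: a minimal edge set
containing at least two cycles. -/
def LiftCircuit (G : MGraph V α) (X : Finset α) : Prop :=
  X ⊆ G.E ∧ G.TwoCycles X ∧ ∀ Y ⊂ X, ¬ G.TwoCycles Y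

/-- `X` is independent in the bicircular lift matroid `L(G)`. -/
def LiftIndep (G : MGraph V α) (X : Finset α) : Prop :=
  X ⊆ G.E ∧ ∀ C ⊆ X, ¬ G.LiftCircuit C

/-- `L(G)` has at least two circuits. -/
def TwoLiftCircuits (G : MGraph V α) : Prop :=
  ∃ X Y : Finset α, G.LiftCircuit X ∧ G.LiftCircuit Y ∧ X ≠ Y

/-- Equality of the bicircular lift matroids `L(G₁) = L(G₂)` (equal ground sets
and equal circuit collections). -/
def LiftEq (G₁ : MGraph V₁ α) (G₂ : MGraph V₂ α) : Prop :=
  G₁.E = G₂.E ∧ ∀ X : Finset α, G₁.LiftCircuit X ↔ G₂.LiftCircuit X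

/-- `G₁` and `G₂` are 2-isomorphic, i.e. their graphic matroids on the common
edge set are equal (equivalently, they have the same cycles). -/
def TwoIso (G₁ : MGraph V₁ α) (G₂ : MGraph V₂ α) : Prop :=
  G₁.E = G₂.E ∧ ∀ X : Finset α, G₁.IsCycle X ↔ G₂.IsCycle X

/-- `G` has no loops. -/
def Loopless (G : MGraph V α) : Prop := ∀ e ∈ G.E, ¬ (G.ends e).IsDiag

/-- `G` is connected. -/
def Connected (G : MGraph V α) : Prop :=
  ∀ u v : V, Relation.ReflTransGen (G.Adj G.E) u v

/-- `G` is 2-edge-connected: every edge lies in a cycle. -/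
def TwoEdgeConnected (G : MGraph V α) : Prop :=
  ∀ e ∈ G.E, ∃ C : Finset α, G.IsCycle C ∧ e ∈ C

/-- `e` is a cut-edge of `G`: an edge contained in no cycle. -/
def IsCutEdge (G : MGraph V α) (e : α) : Prop :=
  e ∈ G.E ∧ ∀ C : Finset α, G.IsCycle C → e ∉ C

/-- Deletion of the edge `e` from `G`. -/
def delete (G : MGraph V α) (e : α) : MGraph V α :=
  ⟨G.E.erase e, G.ends⟩

/-- Restriction of `G` to the edge set `X`. -/
def restrict (G : MGraph V α) (X : Finset α) : MGraph V α :=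
  ⟨G.E ∩ X, G.ends⟩

/-- Contraction of the link `e` with endpoints `u, v`: the edge `e` is deleted
and the vertex `v` is identified with `u`. -/
def contractLink (G : MGraph V α) (e : α) (u v : V) : MGraph V α :=
  ⟨G.E.erase e, fun f => (G.ends f).map (fun w => if w = v then u else w)⟩

/-- `X` is a circuit of the contraction `M/e`, where `M` is the matroid with
circuit collection `Circ`: the circuits of `M/e` are the minimal nonempty sets of
the form `C \ {e}` with `C` a circuit of `M`. -/
def ContractCircuit (Circ : Finset α → Prop) (e : α) (X : Finset α) : Prop :=
  (X.Nonempty ∧ ∃ C : Finset α, Circ C ∧ X = C.erase e) ∧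
    ∀ Y ⊂ X, ¬ (Y.Nonempty ∧ ∃ C : Finset α, Circ C ∧ Y = C.erase e)

/-- `e` and `f` form a series pair: no cycle contains exactly one of them. -/
def SeriesPair (G : MGraph V α) (e f : α) : Prop :=
  e ∈ G.E ∧ f ∈ G.E ∧ ∀ C : Finset α, G.IsCycle C → (e ∈ C ↔ f ∈ C)

/-- `X` is a series class of `G`: a maximal set of pairwise series edges. -/
def SeriesClass (G : MGraph V α) (X : Finset α) : Prop :=
  X ⊆ G.E ∧ X.Nonempty ∧ (∀ e ∈ X, ∀ f ∈ X, G.SeriesPair e f) ∧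
    ∀ g ∈ G.E, (∀ e ∈ X, G.SeriesPair e g) → g ∈ X

/-- `G` is cosimple: no cut-edges and no nontrivial series classes. -/
def CoSimple (G : MGraph V α) : Prop :=
  (∀ e ∈ G.E, ¬ G.IsCutEdge e) ∧
    ∀ e ∈ G.E, ∀ f ∈ G.E, e ≠ f → ¬ G.SeriesPair e f

/-- `e` and `f` are parallel edges. -/
def Parallel (G : MGraph V α) (e f : α) : Prop :=
  e ≠ f ∧ G.IsCycle {e, f}

/-- `P` is a parallel class of `G`: a maximal set of pairwise parallel non-loop
edges. -/
def ParallelClass (G : MGraph V α) (P : Finset α) : Prop :=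
  P ⊆ G.E ∧ P.Nonempty ∧ (∀ e ∈ P, ¬ (G.ends e).IsDiag) ∧
    (∀ e ∈ P, ∀ f ∈ P, e ≠ f → G.Parallel e f) ∧
    ∀ g ∈ G.E, g ∉ P → ¬ (G.ends g).IsDiag → ∃ e ∈ P, ¬ G.Parallel e g

/-- `P` is the edge set of a path of `G`: nonempty, acyclic, connected, with all
degrees at most two. -/
def IsPath (G : MGraph V α) (P : Finset α) : Prop :=
  P.Nonempty ∧ P ⊆ G.E ∧ (∀ C ⊆ P, ¬ G.IsCycle C) ∧
    (∀ v, G.VIn P v → G.degIn P v ≤ 2) ∧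
    ∀ u v, G.VIn P u → G.VIn P v → Relation.ReflTransGen (G.Adj P) u v

/-- `P` is the edge set of a path of `G` with end-vertices `x` and `y`. -/
def PathBetween (G : MGraph V α) (P : Finset α) (x y : V) : Prop :=
  G.IsPath P ∧ x ≠ y ∧ G.degIn P x = 1 ∧ G.degIn P y = 1 ∧
    ∀ v, G.degIn P v = 1 → v = x ∨ v = y

/-- `P` is the edge set of an ear of `G`: a path contained in a cycle, whose
internal vertices have degree two in `G` and whose end-vertices have degree at
least three in `G`. -/
def IsEar (G : MGraph V α) (P : Finset α) : Prop :=
  G.IsPath P ∧ (∀ v, G.degIn P v = 2 → G.degIn G.E v = 2) ∧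
    (∀ v, G.degIn P v = 1 → 3 ≤ G.degIn G.E v) ∧
    ∃ C : Finset α, G.IsCycle C ∧ P ⊆ C

/-- `G` is a subdivision of `K_2^n`: two distinct branch vertices joined by `n`
internally disjoint paths whose edge sets partition `E(G)`. -/
def IsK2nSub (G : MGraph V α) (n : ℕ) : Prop :=
  ∃ x y : V, x ≠ y ∧ ∃ P : Fin n → Finset α,
    (G.E = Finset.univ.biUnion fun i => P i) ∧
    (∀ i j : Fin n, i ≠ j → Disjoint (P i) (P j)) ∧
    (∀ i : Fin n, G.PathBetween (P i) x y) ∧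
    (∀ i j : Fin n, i ≠ j → ∀ v, G.VIn (P i) v → G.VIn (P j) v → v = x ∨ v = y)

/-- `G` is a subdivision of `K_2^n` with the edge `e` lying on one of the `n`
paths. -/
def IsK2nSubThrough (G : MGraph V α) (n : ℕ) (e : α) : Prop :=
  ∃ x y : V, x ≠ y ∧ ∃ P : Fin n → Finset α,
    (G.E = Finset.univ.biUnion fun i => P i) ∧
    (∀ i j : Fin n, i ≠ j → Disjoint (P i) (P j)) ∧
    (∀ i : Fin n, G.PathBetween (P i) x y) ∧
    (∀ i j : Fin n, i ≠ j → ∀ v, G.VIn (P i) v → G.VIn (P j) v → v = x ∨ v = y) ∧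
    ∃ i : Fin n, e ∈ P i

/-- `T` is the edge set of a spanning tree of `G`. -/
def IsSpanningTree (G : MGraph V α) (T : Finset α) : Prop :=
  T ⊆ G.E ∧ (∀ C ⊆ T, ¬ G.IsCycle C) ∧
    ∀ u v : V, Relation.ReflTransGen (G.Adj T) u v

end MGraph

/-!
Contracting the link `e = uv` acts on cycles as follows: a cycle through `e` loses `e` and
stays a cycle, a cycle missing `u` or `v` is unchanged, and a cycle through `u` and `v` but not
`e` falls apart into two cycles. Conversely every cycle of `G/e` is `C` or `C - e` for a cycle
`C` of `G`. Hence `X ⊆ E(G/e)` contains two cycles of `G/e` exactly when `X + e` contains two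
cycles of `G`, and the minimal such sets on the two sides correspond: they are the circuits of
`L(G/e)` and of `L(G)/e`.
-/

theorem Sym2.exists_eq_mk_of_map_eq_mk {V W : Type*} {c : V → W} {z : Sym2 V} {m n : W}
    (h : z.map c = s(m, n)) : ∃ m₀ n₀, z = s(m₀, n₀) ∧ c m₀ = m ∧ c n₀ = n := by
  induction z using Sym2.ind with
  | _ p q =>
    rcases Sym2.eq_iff.1 ((Sym2.map_mk c p q).symm.trans h) with ⟨hp, hq⟩ | ⟨hp, hq⟩
    · exact ⟨p, q, rfl, hp, hq⟩
    · exact ⟨q, p, Sym2.eq_swap, hq, hp⟩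

theorem minimal_iff_minimal_of_imp_of_exists_le {β : Type*} [PartialOrder β] {P Q : β → Prop}
    (hPQ : ∀ y, P y → Q y) (hQP : ∀ y, Q y → ∃ z ≤ y, P z) {x : β} :
    Minimal P x ↔ Minimal Q x := by
  constructor
  · refine fun hP => ⟨hPQ x hP.1, fun y hy hyx => ?_⟩
    obtain ⟨z, hzy, hz⟩ := hQP y hy
    exact (hP.2 hz (hzy.trans hyx)).trans hzy
  · intro hQ
    obtain ⟨z, hzx, hz⟩ := hQP x hQ.1
    obtain rfl := hzx.antisymm (hQ.2 (hPQ z hz) hzx)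
    exact ⟨hz, fun y hy hyx => hQ.2 (hPQ y hy) hyx⟩

namespace MGraph

variable {V W α : Type}

section Relabel

variable {G H : MGraph V α} {C T X Y : Finset α} {w : V}

theorem vIn_mono (h : X ⊆ Y) (hw : G.VIn X w) : G.VIn Y w :=
  let ⟨g, hg, hwg⟩ := hw
  ⟨g, h hg, hwg⟩

theorem adj_congr (h : ∀ g ∈ X, G.ends g = H.ends g) : G.Adj X = H.Adj X := by
  ext p q
  exact exists_congr fun g => and_congr_right fun hg => by rw [h g hg]

theorem vIn_congr (h : ∀ g ∈ X, G.ends g = H.ends g) : G.VIn X = H.VIn X := by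
  ext w
  exact exists_congr fun g => and_congr_right fun hg => by rw [h g hg]

def mapVerts (G : MGraph V α) (c : V → W) : MGraph W α :=
  ⟨G.E, fun f => (G.ends f).map c⟩

theorem mapVerts_mapVerts {W' : Type} (G : MGraph V α) (c : V → W) (d : W → W') :
    (G.mapVerts c).mapVerts d = G.mapVerts (d ∘ c) := by
  simp [mapVerts, Sym2.map_map]

theorem mapVerts_id (G : MGraph V α) : G.mapVerts id = G := by
  simp [mapVerts]

theorem vIn_mapVerts_iff {c : V → W} {w : W} :
    (G.mapVerts c).VIn C w ↔ ∃ w₀, G.VIn C w₀ ∧ c w₀ = w := by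
  simp only [VIn, mapVerts, Sym2.mem_map]
  grind

theorem reflTransGen_of_mapVerts {c : V → W} (hCT : C ⊆ T)
    (hfib : ∀ p q, c p = c q → Relation.ReflTransGen (G.Adj T) p q) {p q : V}
    (h : Relation.ReflTransGen ((G.mapVerts c).Adj C) (c p) (c q)) :
    Relation.ReflTransGen (G.Adj T) p q := by
  suffices ∀ y, Relation.ReflTransGen ((G.mapVerts c).Adj C) (c p) y →
      ∀ q, c q = y → Relation.ReflTransGen (G.Adj T) p q from this _ h q rfl
  intro y hy
  induction hy with
  | refl => exact fun q hq => hfib p q hq.symm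
  | tail _ hmn ih =>
    intro q hq
    obtain ⟨g, hg, hgmn⟩ := hmn
    obtain ⟨m₀, n₀, hg₀, hm₀, hn₀⟩ := Sym2.exists_eq_mk_of_map_eq_mk hgmn
    exact ((ih m₀ hm₀).tail ⟨g, hCT hg, hg₀⟩).trans (hfib n₀ q (hn₀.trans hq.symm))

end Relabel

section Degree

variable [DecidableEq V]

def endCount (z : Sym2 V) (w : V) : ℕ :=
  if z = s(w, w) then 2 else if w ∈ z then 1 else 0

theorem endCount_mk (p q w : V) :
    endCount s(p, q) w = (if p = w then 1 else 0) + (if q = w then 1 else 0) := by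
  by_cases hp : p = w <;> by_cases hq : q = w <;> simp [endCount, hp, hq, eq_comm]

theorem endCount_pos_iff {z : Sym2 V} {w : V} : 0 < endCount z w ↔ w ∈ z := by
  induction z using Sym2.ind with
  | _ p q =>
    simp only [endCount_mk, Sym2.mem_iff]; split_ifs <;> grind

theorem endCount_map_equiv [DecidableEq W] (σ : V ≃ W) (z : Sym2 V) (w : V) :
    endCount (z.map σ) (σ w) = endCount z w := by
  induction z using Sym2.ind with
  | _ p q => simp only [Sym2.map_mk, endCount_mk, σ.injective.eq_iff]

variable {G H : MGraph V α} {X Y : Finset α} {f : α} {w : V}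

theorem degIn_eq_sum (G : MGraph V α) (X : Finset α) (w : V) :
    G.degIn X w = ∑ g ∈ X, endCount (G.ends g) w := rfl

theorem vIn_iff_degIn_pos : G.VIn X w ↔ 0 < G.degIn X w := by
  simp only [degIn_eq_sum, Finset.sum_pos_iff, endCount_pos_iff, VIn]

theorem degIn_eq_zero_iff : G.degIn X w = 0 ↔ ¬ G.VIn X w := by
  rw [vIn_iff_degIn_pos, Nat.pos_iff_ne_zero, not_not]

theorem degIn_mono (h : X ⊆ Y) : G.degIn X w ≤ G.degIn Y w :=
  Finset.sum_le_sum_of_subset h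

theorem degIn_singleton (G : MGraph V α) (f : α) (w : V) :
    G.degIn {f} w = endCount (G.ends f) w :=
  Finset.sum_singleton _ _

theorem degIn_congr (h : ∀ g ∈ X, G.ends g = H.ends g) : G.degIn X = H.degIn X := by
  ext w
  exact Finset.sum_congr rfl fun g hg => by rw [h g hg]

variable [DecidableEq α]

theorem degIn_union (h : Disjoint X Y) : G.degIn (X ∪ Y) w = G.degIn X w + G.degIn Y w :=
  Finset.sum_union h

theorem degIn_insert (hf : f ∉ X) :
    G.degIn (insert f X) w = endCount (G.ends f) w + G.degIn X w :=
  Finset.sum_insert hf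

theorem degIn_erase_add (hf : f ∈ X) :
    G.degIn (X.erase f) w + endCount (G.ends f) w = G.degIn X w :=
  Finset.sum_erase_add X _ hf

end Degree

section Cycle

variable [DecidableEq V] {G H : MGraph V α} {C D : Finset α} {e f : α} {w : V}

theorem IsCycle.nonempty (hC : G.IsCycle C) : C.Nonempty := hC.1

theorem IsCycle.subset (hC : G.IsCycle C) : C ⊆ G.E := hC.2.1

theorem IsCycle.degIn_eq_two (hC : G.IsCycle C) (hw : G.VIn C w) : G.degIn C w = 2 :=
  hC.2.2.1 w hw

theorem IsCycle.reflTransGen (hC : G.IsCycle C) {p q : V} (hp : G.VIn C p) (hq : G.VIn C q) :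
    Relation.ReflTransGen (G.Adj C) p q :=
  hC.2.2.2 p q hp hq

theorem isCycle_congr (hE : G.E = H.E) (h : ∀ g ∈ C, G.ends g = H.ends g) :
    G.IsCycle C ↔ H.IsCycle C := by
  simp only [IsCycle, hE, adj_congr h, vIn_congr h, degIn_congr h]

theorem IsCycle.mapVerts_equiv [DecidableEq W] (σ : V ≃ W) (hC : G.IsCycle C) : (G.mapVerts σ).IsCycle C := by
  have hdeg (w : V) : (G.mapVerts σ).degIn C (σ w) = G.degIn C w :=
    Finset.sum_congr rfl fun g _ => endCount_map_equiv σ _ w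
  have hvIn (w : V) : (G.mapVerts σ).VIn C (σ w) ↔ G.VIn C w := by
    rw [vIn_iff_degIn_pos, vIn_iff_degIn_pos, hdeg]
  refine ⟨hC.nonempty, hC.subset, fun w hw => ?_, fun p q hp hq => ?_⟩
  · obtain ⟨w, rfl⟩ := σ.surjective w
    rw [hdeg]
    exact hC.degIn_eq_two ((hvIn _).1 hw)
  · obtain ⟨p, rfl⟩ := σ.surjective p
    obtain ⟨q, rfl⟩ := σ.surjective q
    refine Relation.ReflTransGen.lift σ (fun x y ⟨g, hg, hxy⟩ => ⟨g, hg, ?_⟩) _ _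
      (hC.reflTransGen ((hvIn _).1 hp) ((hvIn _).1 hq))
    simp [mapVerts, hxy]

theorem isCycle_mapVerts_equiv_iff [DecidableEq W] (σ : V ≃ W) : (G.mapVerts σ).IsCycle C ↔ G.IsCycle C := by
  refine ⟨fun h => ?_, IsCycle.mapVerts_equiv σ⟩
  simpa [mapVerts_mapVerts, mapVerts_id] using h.mapVerts_equiv σ.symm

theorem isCycle_singleton_of_loop (hf : f ∈ G.E) (hloop : G.ends f = s(w, w)) :
    G.IsCycle {f} := by
  have hvert {p : V} (hp : G.VIn {f} p) : p = w := by
    obtain ⟨g, hg, hpg⟩ := hp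
    rw [Finset.mem_singleton.1 hg, hloop, Sym2.mem_iff, or_self] at hpg
    exact hpg
  refine ⟨Finset.singleton_nonempty f, Finset.singleton_subset_iff.2 hf, fun p hp => ?_,
    fun p q hp hq => ?_⟩
  · simp [degIn_singleton, hloop, hvert hp, endCount]
  · rw [hvert hp, hvert hq]

theorem IsCycle.eq_of_subset (hD : G.IsCycle D) (hC : G.IsCycle C) (hCD : C ⊆ D) : C = D := by
  classical
  have closed : ∀ w, G.VIn C w → ∀ g ∈ D, w ∈ G.ends g → g ∈ C := by
    intro w hw g hg hwg
    by_contra hgC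
    have hle : G.degIn (insert g C) w ≤ G.degIn D w :=
      degIn_mono (Finset.insert_subset hg hCD)
    rw [degIn_insert hgC, hC.degIn_eq_two hw, hD.degIn_eq_two (vIn_mono hCD hw)] at hle
    have := endCount_pos_iff.2 hwg
    omega
  have reach {p q : V} (hpq : Relation.ReflTransGen (G.Adj D) p q) : G.VIn C p → G.VIn C q := by
    induction hpq with
    | refl => exact id
    | tail _ hmq ih =>
      obtain ⟨g, hg, hgmq⟩ := hmq
      exact fun hp => ⟨g, closed _ (ih hp) g hg (hgmq ▸ Sym2.mem_mk_left _ _),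
        hgmq ▸ Sym2.mem_mk_right _ _⟩
  refine hCD.antisymm fun g hg => ?_
  obtain ⟨g₀, hg₀⟩ := hC.nonempty
  have hw₀ : G.VIn C (G.ends g₀).out.1 := ⟨g₀, hg₀, Sym2.out_fst_mem _⟩
  have hwg : (G.ends g).out.1 ∈ G.ends g := Sym2.out_fst_mem _
  exact closed _ (reach (hD.reflTransGen (vIn_mono hCD hw₀) ⟨g, hg, hwg⟩) hw₀) g hg hwg

variable [DecidableEq α]

theorem isCycle_delete_iff :
    (G.delete e).IsCycle C ↔ G.IsCycle C ∧ e ∉ C := by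
  simp only [IsCycle, delete, Finset.subset_erase]
  tauto

theorem IsCycle.eq_of_erase_eq (h₁ : G.IsCycle C) (h₂ : G.IsCycle D)
    (h : C.erase e = D.erase e) : C = D := by
  by_cases hC : e ∈ C <;> by_cases hD : e ∈ D
  · rw [← Finset.insert_erase hC, ← Finset.insert_erase hD, h]
  · refine (h₁.eq_of_subset h₂ ?_).symm
    rw [← Finset.erase_eq_of_notMem hD, ← h]
    exact Finset.erase_subset e C
  · refine h₂.eq_of_subset h₁ ?_
    rw [← Finset.erase_eq_of_notMem hC, h]
    exact Finset.erase_subset e D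
  · rwa [Finset.erase_eq_of_notMem hC, Finset.erase_eq_of_notMem hD] at h

end Cycle

section Identify

variable [DecidableEq V] {G : MGraph V α} {C D : Finset α} {f : α} {a b w : V}

def collapse (a b : V) (w : V) : V := if w = b then a else w

def identify (G : MGraph V α) (a b : V) : MGraph V α := G.mapVerts (collapse a b)

theorem contractLink_eq [DecidableEq α] (G : MGraph V α) (e : α) (u v : V) :
    G.contractLink e u v = (G.identify u v).delete e := rfl

theorem identify_ends (G : MGraph V α) (a b : V) (f : α) :
    (G.identify a b).ends f = (G.ends f).map (collapse a b) := rfl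

theorem collapse_left (a b : V) : collapse a b a = a := by
  by_cases hab : a = b <;> simp [collapse, hab]

theorem collapse_right (a b : V) : collapse a b b = a := if_pos rfl

theorem collapse_of_ne {w : V} (hwb : w ≠ b) : collapse a b w = w := if_neg hwb

theorem collapse_eq_swap_comp (a b : V) : collapse a b = Equiv.swap a b ∘ collapse b a := by
  ext w
  simp only [collapse, Function.comp_apply, Equiv.swap_apply_def]
  split_ifs <;> simp_all

theorem identify_identify (G : MGraph V α) (a b x : V) :
    (G.identify b x).identify a b = (G.identify a b).identify a x := by
  simp only [identify, mapVerts_mapVerts]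
  congr 1
  ext w
  simp only [collapse, Function.comp_apply]
  split_ifs <;> simp_all

theorem endCount_map_collapse_left (hab : a ≠ b) (z : Sym2 V) :
    endCount (z.map (collapse a b)) a = endCount z a + endCount z b := by
  induction z using Sym2.ind with
  | _ p q =>
    simp only [Sym2.map_mk, endCount_mk, collapse]
    split_ifs <;> grind

theorem endCount_map_collapse_right (hab : a ≠ b) (z : Sym2 V) :
    endCount (z.map (collapse a b)) b = 0 := by
  induction z using Sym2.ind with
  | _ p q =>
    simp only [Sym2.map_mk, endCount_mk, collapse]
    split_ifs <;> grind

theorem endCount_map_collapse_of_ne (hwa : w ≠ a) (hwb : w ≠ b) (z : Sym2 V) :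
    endCount (z.map (collapse a b)) w = endCount z w := by
  induction z using Sym2.ind with
  | _ p q =>
    simp only [Sym2.map_mk, endCount_mk, collapse]
    split_ifs <;> grind

theorem endCount_link_left (hab : a ≠ b) : endCount s(a, b) a = 1 := by
  simp [endCount_mk, Ne.symm hab]

theorem endCount_link_right (hab : a ≠ b) : endCount s(a, b) b = 1 := by
  simp [endCount_mk, hab]

theorem endCount_link_of_ne {w : V} (hwa : w ≠ a) (hwb : w ≠ b) : endCount s(a, b) w = 0 := by
  simp [endCount_mk, Ne.symm hwa, Ne.symm hwb]

theorem degIn_identify_left (hab : a ≠ b) :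
    (G.identify a b).degIn C a = G.degIn C a + G.degIn C b := by
  simp only [degIn_eq_sum, identify_ends, endCount_map_collapse_left hab, Finset.sum_add_distrib]

theorem degIn_identify_right (hab : a ≠ b) : (G.identify a b).degIn C b = 0 := by
  simp only [degIn_eq_sum, identify_ends, endCount_map_collapse_right hab, Finset.sum_const_zero]

theorem degIn_identify_of_ne (hwa : w ≠ a) (hwb : w ≠ b) :
    (G.identify a b).degIn C w = G.degIn C w := by
  simp only [degIn_eq_sum, identify_ends, endCount_map_collapse_of_ne hwa hwb]

theorem vIn_identify_of_ne (hwa : w ≠ a) (hwb : w ≠ b) :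
    (G.identify a b).VIn C w ↔ G.VIn C w := by
  rw [vIn_iff_degIn_pos, vIn_iff_degIn_pos, degIn_identify_of_ne hwa hwb]

theorem VIn.identify (hw : G.VIn C w) : (G.identify a b).VIn C (collapse a b w) :=
  let ⟨g, hg, hwg⟩ := hw
  ⟨g, hg, Sym2.mem_map.2 ⟨w, hwg, rfl⟩⟩

theorem isCycle_identify_iff_of_not_vIn_right (hb : ¬ G.VIn C b) :
    (G.identify a b).IsCycle C ↔ G.IsCycle C := by
  refine isCycle_congr rfl fun g hg => ?_
  rw [identify_ends, Sym2.map_congr (g := id), Sym2.map_id, id]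
  intro p hp
  exact if_neg fun hpb : p = b => hb ⟨g, hg, hpb ▸ hp⟩

theorem isCycle_identify_iff_of_not_vIn (h : ¬ G.VIn C a ∨ ¬ G.VIn C b) :
    (G.identify a b).IsCycle C ↔ G.IsCycle C := by
  rcases h with ha | hb
  · have : G.identify a b = (G.identify b a).mapVerts (Equiv.swap a b) := by
      rw [identify, identify, mapVerts_mapVerts, collapse_eq_swap_comp]
    rw [this, isCycle_mapVerts_equiv_iff, isCycle_identify_iff_of_not_vIn_right ha]
  · exact isCycle_identify_iff_of_not_vIn_right hb

theorem IsCycle.of_identify (hC : (G.identify a b).IsCycle C) (hab : a ≠ b) :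
    G.IsCycle C ∨ G.degIn C b = 1 := by
  by_cases hb : G.degIn C b = 1
  · exact .inr hb
  refine .inl ((isCycle_identify_iff_of_not_vIn ?_).1 hC)
  rw [← degIn_eq_zero_iff, ← degIn_eq_zero_iff]
  have hdeg := degIn_identify_left (G := G) (C := C) hab
  by_cases ha : (G.identify a b).VIn C a
  · have := hC.degIn_eq_two ha
    omega
  · rw [← degIn_eq_zero_iff] at ha
    omega

variable [DecidableEq α]

theorem IsCycle.identify_erase (hD : G.IsCycle D) (hfD : f ∈ D) (hab : a ≠ b)
    (hf : G.ends f = s(a, b)) : (G.identify a b).IsCycle (D.erase f) := by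
  have hdeg (w : V) : G.degIn (D.erase f) w + endCount s(a, b) w = G.degIn D w :=
    hf ▸ degIn_erase_add hfD
  have hend (w : V) (hw : w ∈ G.ends f) : G.degIn (D.erase f) w = 1 := by
    have := hdeg w
    rw [hD.degIn_eq_two ⟨f, hfD, hw⟩] at this
    rw [hf, Sym2.mem_iff] at hw
    rcases hw with rfl | rfl
    · rw [endCount_link_left hab] at this; omega
    · rw [endCount_link_right hab] at this; omega
  have ha := hend a (hf ▸ Sym2.mem_mk_left a b)
  have hb := hend b (hf ▸ Sym2.mem_mk_right a b)
  refine ⟨?_, (Finset.erase_subset f D).trans hD.subset, fun w hw => ?_, fun p q hp hq => ?_⟩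
  · obtain ⟨g, hg, -⟩ : G.VIn (D.erase f) a := vIn_iff_degIn_pos.2 (by omega)
    exact ⟨g, hg⟩
  · have hwb : w ≠ b := by
      rintro rfl
      exact absurd (degIn_identify_right hab) (vIn_iff_degIn_pos.1 hw).ne'
    by_cases hwa : w = a
    · rw [hwa, degIn_identify_left hab, ha, hb]
    · rw [degIn_identify_of_ne hwa hwb]
      have hwD := vIn_mono (Finset.erase_subset f D) ((vIn_identify_of_ne hwa hwb).1 hw)
      have := hdeg w
      rw [endCount_link_of_ne hwa hwb, hD.degIn_eq_two hwD] at this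
      omega
  · obtain ⟨p₀, hp₀, rfl⟩ := vIn_mapVerts_iff.1 hp
    obtain ⟨q₀, hq₀, rfl⟩ := vIn_mapVerts_iff.1 hq
    refine Relation.ReflTransGen.lift' (collapse a b) (fun x y ⟨g, hg, hxy⟩ => ?_) _ _
      (hD.reflTransGen (vIn_mono (Finset.erase_subset f D) hp₀)
        (vIn_mono (Finset.erase_subset f D) hq₀))
    by_cases hgf : g = f
    · rw [hgf, hf, Sym2.eq_iff] at hxy
      rcases hxy with ⟨rfl, rfl⟩ | ⟨rfl, rfl⟩ <;>
        simp only [Function.onFun, collapse_left, collapse_right] <;> exact .refl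
    · exact .single ⟨g, Finset.mem_erase.2 ⟨hgf, hg⟩, by rw [identify_ends, hxy, Sym2.map_mk]⟩

theorem IsCycle.insert_of_identify (hC : (G.identify a b).IsCycle C) (hb : G.degIn C b = 1)
    (hab : a ≠ b) (hf : G.ends f = s(a, b)) (hfE : f ∈ G.E) (hfC : f ∉ C) :
    G.IsCycle (insert f C) := by
  have haC : (G.identify a b).VIn C a := by
    rw [vIn_iff_degIn_pos, degIn_identify_left hab]
    omega
  have ha : G.degIn C a = 1 := by
    have := hC.degIn_eq_two haC
    rw [degIn_identify_left hab] at this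
    omega
  have hdeg (w : V) : G.degIn (insert f C) w = endCount s(a, b) w + G.degIn C w :=
    hf ▸ degIn_insert hfC
  have hfib (p q : V) (hpq : collapse a b p = collapse a b q) :
      Relation.ReflTransGen (G.Adj (insert f C)) p q := by
    have hadj : G.Adj (insert f C) a b := ⟨f, Finset.mem_insert_self f C, hf⟩
    unfold collapse at hpq
    split_ifs at hpq with hp hq hq
    · exact hp ▸ hq ▸ .refl
    · exact hp ▸ hpq ▸ .single ⟨f, Finset.mem_insert_self f C, hf.trans Sym2.eq_swap⟩
    · exact hq ▸ hpq ▸ .single hadj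
    · exact hpq ▸ .refl
  have hvert {p : V} (hp : G.VIn (insert f C) p) : (G.identify a b).VIn C (collapse a b p) := by
    obtain ⟨g, hg, hpg⟩ := hp
    rcases Finset.mem_insert.1 hg with rfl | hgC
    · rw [hf, Sym2.mem_iff] at hpg
      rcases hpg with rfl | rfl
      · rwa [collapse_left]
      · rwa [collapse_right]
    · exact VIn.identify ⟨g, hgC, hpg⟩
  refine ⟨Finset.insert_nonempty f C, Finset.insert_subset hfE hC.subset, fun w hw => ?_,
    fun p q hp hq => reflTransGen_of_mapVerts (Finset.subset_insert f C) hfib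
      (hC.reflTransGen (hvert hp) (hvert hq))⟩
  rw [hdeg]
  by_cases hwa : w = a
  · rw [hwa, endCount_link_left hab, ha]
  by_cases hwb : w = b
  · rw [hwb, endCount_link_right hab, hb]
  have := hC.degIn_eq_two (collapse_of_ne hwb ▸ hvert hw)
  rw [degIn_identify_of_ne hwa hwb] at this
  rw [endCount_link_of_ne hwa hwb, this]

end Identify

section Split

variable [DecidableEq V] {G : MGraph V α} {D P : Finset α} {f : α} {a b x : V}

theorem isCycle_identify_of_identify_identify (hP : ((G.identify a b).identify a x).IsCycle P)
    (hxa : x ≠ a) (hxb : x ≠ b) (hPx : G.degIn P x = 0) : (G.identify a b).IsCycle P := by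
  refine (isCycle_identify_iff_of_not_vIn (.inr ?_)).1 hP
  rw [← degIn_eq_zero_iff, degIn_identify_of_ne hxa hxb, hPx]

variable [DecidableEq α]

def SplitsIntoTwoCycles (G : MGraph V α) (D : Finset α) : Prop :=
  ∃ C₁ C₂, C₁ ∪ C₂ = D ∧ Disjoint C₁ C₂ ∧ G.IsCycle C₁ ∧ G.IsCycle C₂

theorem SplitsIntoTwoCycles.twoCycles (h : G.SplitsIntoTwoCycles D) : G.TwoCycles D := by
  obtain ⟨C₁, C₂, rfl, hdisj, h₁, h₂⟩ := h
  refine ⟨C₁, C₂, h₁, h₂, Finset.subset_union_left, Finset.subset_union_right, fun h => ?_⟩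
  obtain ⟨g, hg⟩ := h₁.nonempty
  exact Finset.disjoint_left.1 hdisj hg (h ▸ hg)

theorem IsCycle.splitsIntoTwoCycles_identify_of_link (hD : G.IsCycle D) (hfD : f ∈ D)
    (hab : a ≠ b) (hf : G.ends f = s(a, b)) : (G.identify a b).SplitsIntoTwoCycles D := by
  refine ⟨{f}, D.erase f, by rw [← Finset.insert_eq, Finset.insert_erase hfD],
    Finset.disjoint_singleton_left.2 (Finset.notMem_erase f D),
    isCycle_singleton_of_loop (w := a) (hD.subset hfD) ?_, hD.identify_erase hfD hab hf⟩
  rw [identify_ends, hf, Sym2.map_mk, collapse_right, collapse_left]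

/-- Contract the edge `f = bx` of `D` first: exactly one of the two cycles of `D - f` meets `x`,
and adding `f` back to that one splits `D`. -/
theorem IsCycle.splitsIntoTwoCycles_identify_of_erase (hD : G.IsCycle D) (hfD : f ∈ D)
    (hf : G.ends f = s(b, x)) (hxa : x ≠ a) (hxb : x ≠ b)
    (h : ((G.identify a b).identify a x).SplitsIntoTwoCycles (D.erase f)) :
    (G.identify a b).SplitsIntoTwoCycles D := by
  have split (P Q : Finset α) (hPQ : P ∪ Q = D.erase f) (hdisj : Disjoint P Q)
      (hP : ((G.identify a b).identify a x).IsCycle P)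
      (hQ : ((G.identify a b).identify a x).IsCycle Q) (hPx : G.degIn P x = 0)
      (hQx : G.degIn Q x = 1) : (G.identify a b).SplitsIntoTwoCycles D := by
    have hfPQ : f ∉ P ∪ Q := hPQ ▸ Finset.notMem_erase f D
    refine ⟨P, insert f Q, by rw [Finset.union_insert, hPQ, Finset.insert_erase hfD],
      Finset.disjoint_insert_right.2 ⟨fun hfP => hfPQ (Finset.mem_union_left Q hfP), hdisj⟩,
      isCycle_identify_of_identify_identify hP hxa hxb hPx,
      hQ.insert_of_identify ?_ hxa.symm ?_ (hD.subset hfD)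
        fun hfQ => hfPQ (Finset.mem_union_right P hfQ)⟩
    · rw [degIn_identify_of_ne hxa hxb, hQx]
    · rw [identify_ends, hf, Sym2.map_mk, collapse_right, collapse_of_ne hxb]
  obtain ⟨A, B, hAB, hdisj, hA, hB⟩ := h
  have hx : G.degIn A x + G.degIn B x + 1 = 2 := by
    rw [← degIn_union hdisj, hAB, ← endCount_link_right hxb.symm, ← hf, degIn_erase_add hfD,
      hD.degIn_eq_two ⟨f, hfD, hf ▸ Sym2.mem_mk_right b x⟩]
  obtain ⟨hAx, hBx⟩ | ⟨hAx, hBx⟩ :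
      G.degIn A x = 0 ∧ G.degIn B x = 1 ∨ G.degIn A x = 1 ∧ G.degIn B x = 0 := by
    omega
  · exact split A B hAB hdisj hA hB hAx hBx
  · exact split B A (Finset.union_comm A B ▸ hAB) hdisj.symm hB hA hBx hAx

theorem IsCycle.splitsIntoTwoCycles_identify (hD : G.IsCycle D) (hab : a ≠ b)
    (ha : G.VIn D a) (hb : G.VIn D b) : (G.identify a b).SplitsIntoTwoCycles D := by
  induction D using Finset.strongInduction generalizing G b with
  | H D ih =>
  obtain ⟨f, hfD, hbf⟩ := hb
  obtain ⟨x, hf⟩ := Sym2.mem_iff_exists.1 hbf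
  have hxb : x ≠ b := by
    rintro rfl
    obtain ⟨g, hg, hag⟩ := ha
    rw [← hD.eq_of_subset (isCycle_singleton_of_loop (hD.subset hfD) hf)
      (Finset.singleton_subset_iff.2 hfD), Finset.mem_singleton] at hg
    rw [hg, hf, Sym2.mem_iff, or_self] at hag
    exact hab hag
  by_cases hxa : x = a
  · exact hD.splitsIntoTwoCycles_identify_of_link hfD hab (hxa ▸ hf.trans Sym2.eq_swap)
  have hdeg (w : V) : G.degIn (D.erase f) w + endCount s(b, x) w = G.degIn D w :=
    hf ▸ degIn_erase_add hfD
  have ha' : (G.identify b x).VIn (D.erase f) a := by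
    have := hdeg a
    rw [endCount_link_of_ne hab (Ne.symm hxa), hD.degIn_eq_two ha] at this
    rw [vIn_iff_degIn_pos, degIn_identify_of_ne hab (Ne.symm hxa)]
    omega
  have hb' : (G.identify b x).VIn (D.erase f) b := by
    have := hdeg b
    rw [endCount_link_left hxb.symm, hD.degIn_eq_two ⟨f, hfD, hbf⟩] at this
    rw [vIn_iff_degIn_pos, degIn_identify_left hxb.symm]
    omega
  have h := ih _ (Finset.erase_ssubset hfD) (hD.identify_erase hfD hxb.symm hf) hab ha' hb'
  rw [identify_identify] at h
  exact hD.splitsIntoTwoCycles_identify_of_erase hfD hf hxa hxb h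

end Split

section Contract

variable [DecidableEq V] {G : MGraph V α} {C D X Y : Finset α} {e : α} {u v : V}

theorem TwoCycles.mono (h : G.TwoCycles X) (hXY : X ⊆ Y) : G.TwoCycles Y :=
  let ⟨C₁, C₂, h₁, h₂, hs₁, hs₂, hne⟩ := h
  ⟨C₁, C₂, h₁, h₂, hs₁.trans hXY, hs₂.trans hXY, hne⟩

theorem LiftCircuit.subset (h : G.LiftCircuit X) : X ⊆ G.E := h.1

theorem LiftCircuit.twoCycles (h : G.LiftCircuit X) : G.TwoCycles X := h.2.1

theorem liftCircuit_iff_minimal :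
    G.LiftCircuit X ↔ Minimal (fun Y => Y ⊆ G.E ∧ G.TwoCycles Y) X := by
  rw [minimal_iff_forall_lt]
  exact ⟨fun ⟨hXE, hX, hmin⟩ => ⟨⟨hXE, hX⟩, fun Y hYX hY => hmin Y hYX hY.2⟩,
    fun ⟨⟨hXE, hX⟩, hmin⟩ => ⟨hXE, hX, fun Y hYX hY => hmin hYX ⟨hYX.subset.trans hXE, hY⟩⟩⟩

theorem exists_liftCircuit_subset (hXE : X ⊆ G.E) (hX : G.TwoCycles X) :
    ∃ C ⊆ X, G.LiftCircuit C := by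
  simp only [liftCircuit_iff_minimal]
  exact exists_minimal_le_of_wellFoundedLT _ X ⟨hXE, hX⟩

variable [DecidableEq α]

theorem contractCircuit_iff_minimal {Circ : Finset α → Prop} :
    ContractCircuit Circ e X ↔ Minimal (fun Y => Y.Nonempty ∧ ∃ C, Circ C ∧ Y = C.erase e) X := by
  rw [minimal_iff_forall_lt]
  rfl

theorem TwoCycles.erase_nonempty (h : G.TwoCycles X) : (X.erase e).Nonempty := by
  obtain ⟨C₁, C₂, h₁, h₂, hs₁, hs₂, hne⟩ := h
  by_contra hempty
  have hXe : X ⊆ {e} := by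
    rwa [Finset.not_nonempty_iff_eq_empty, ← Finset.subset_empty, ← Finset.subset_insert_iff]
      at hempty
  exact hne (((h₁.nonempty.subset_singleton_iff).1 (hs₁.trans hXe)).trans
    ((h₂.nonempty.subset_singleton_iff).1 (hs₂.trans hXe)).symm)

theorem isCycle_contractLink_iff :
    (G.contractLink e u v).IsCycle C ↔ (G.identify u v).IsCycle C ∧ e ∉ C := by
  rw [contractLink_eq, isCycle_delete_iff]

theorem IsCycle.exists_of_contractLink (hC : (G.contractLink e u v).IsCycle C) (he : e ∈ G.E)
    (huv : u ≠ v) (hends : G.ends e = s(u, v)) :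
    ∃ D, G.IsCycle D ∧ D.erase e = C ∧ D ⊆ insert e C := by
  obtain ⟨hC, heC⟩ := isCycle_contractLink_iff.1 hC
  rcases hC.of_identify huv with hGC | hv
  · exact ⟨C, hGC, Finset.erase_eq_of_notMem heC, Finset.subset_insert e C⟩
  · exact ⟨insert e C, hC.insert_of_identify hv huv hends he heC, Finset.erase_insert heC,
      subset_rfl⟩

theorem IsCycle.contractLink_erase (hD : G.IsCycle D) (huv : u ≠ v) (hends : G.ends e = s(u, v))
    (h : ¬(e ∉ D ∧ G.VIn D u ∧ G.VIn D v)) : (G.contractLink e u v).IsCycle (D.erase e) := by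
  refine isCycle_contractLink_iff.2 ⟨?_, Finset.notMem_erase e D⟩
  by_cases heD : e ∈ D
  · exact hD.identify_erase heD huv hends
  · rw [Finset.erase_eq_of_notMem heD]
    exact (isCycle_identify_iff_of_not_vIn (by tauto)).2 hD

theorem IsCycle.twoCycles_contractLink (hD : G.IsCycle D) (huv : u ≠ v) (heD : e ∉ D)
    (hu : G.VIn D u) (hv : G.VIn D v) : (G.contractLink e u v).TwoCycles D := by
  obtain ⟨C₁, C₂, h₁, h₂, hs₁, hs₂, hne⟩ :=
    (hD.splitsIntoTwoCycles_identify huv hu hv).twoCycles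
  exact ⟨C₁, C₂, isCycle_contractLink_iff.2 ⟨h₁, fun h => heD (hs₁ h)⟩,
    isCycle_contractLink_iff.2 ⟨h₂, fun h => heD (hs₂ h)⟩, hs₁, hs₂, hne⟩

theorem twoCycles_contractLink_iff (he : e ∈ G.E) (huv : u ≠ v) (hends : G.ends e = s(u, v)) :
    (G.contractLink e u v).TwoCycles X ↔ G.TwoCycles (insert e X) := by
  constructor
  · rintro ⟨C₁, C₂, h₁, h₂, hs₁, hs₂, hne⟩
    obtain ⟨D₁, hD₁, rfl, hsD₁⟩ := h₁.exists_of_contractLink he huv hends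
    obtain ⟨D₂, hD₂, rfl, hsD₂⟩ := h₂.exists_of_contractLink he huv hends
    exact ⟨D₁, D₂, hD₁, hD₂, hsD₁.trans (Finset.insert_subset_insert e hs₁),
      hsD₂.trans (Finset.insert_subset_insert e hs₂), fun h => hne (h ▸ rfl)⟩
  · rintro ⟨D₁, D₂, hD₁, hD₂, hs₁, hs₂, hne⟩
    by_cases h₁ : e ∉ D₁ ∧ G.VIn D₁ u ∧ G.VIn D₁ v
    · exact (hD₁.twoCycles_contractLink huv h₁.1 h₁.2.1 h₁.2.2).mono
        ((Finset.subset_insert_iff_of_notMem h₁.1).1 hs₁)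
    by_cases h₂ : e ∉ D₂ ∧ G.VIn D₂ u ∧ G.VIn D₂ v
    · exact (hD₂.twoCycles_contractLink huv h₂.1 h₂.2.1 h₂.2.2).mono
        ((Finset.subset_insert_iff_of_notMem h₂.1).1 hs₂)
    exact ⟨D₁.erase e, D₂.erase e, hD₁.contractLink_erase huv hends h₁,
      hD₂.contractLink_erase huv hends h₂, Finset.subset_insert_iff.1 hs₁,
      Finset.subset_insert_iff.1 hs₂, fun h => hne (hD₁.eq_of_erase_eq hD₂ h)⟩

end Contract

end MGraph

/-- for a link `e` of `G`, `L(G)/e = L(G/e)`. -/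
theorem lift_contract_link_eq
    {V α : Type} [DecidableEq V] [DecidableEq α] (G : MGraph V α)
    (e : α) (he : e ∈ G.E) (u v : V) (huv : u ≠ v) (hends : G.ends e = s(u, v)) :
    ∀ X : Finset α,
      MGraph.ContractCircuit G.LiftCircuit e X ↔ (G.contractLink e u v).LiftCircuit X := by
  intro X
  rw [MGraph.contractCircuit_iff_minimal, MGraph.liftCircuit_iff_minimal]
  refine minimal_iff_minimal_of_imp_of_exists_le ?_ ?_
  · rintro Y ⟨-, C, hC, rfl⟩
    exact ⟨Finset.erase_subset_erase e hC.subset, (MGraph.twoCycles_contractLink_iff he huv hends).2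
      (hC.twoCycles.mono (Finset.subset_insert_iff.2 subset_rfl))⟩
  · rintro Y ⟨hYE, hY⟩
    obtain ⟨C, hCY, hC⟩ := MGraph.exists_liftCircuit_subset
      (Finset.insert_subset he (hYE.trans (Finset.erase_subset e G.E)))
      ((MGraph.twoCycles_contractLink_iff he huv hends).1 hY)
    exact ⟨C.erase e, Finset.subset_insert_iff.1 hCY, hC.twoCycles.erase_nonempty, C, hC, rfl⟩
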